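/- arXiv:2010.14760 — 2 statements merged into one kernel-verified Lean document; each statement's English description precedes it below -/
import Mathlib

section
/- Let (a_1,...,a_n) be positive integers with convergent denominators q_{n-1}, q_n given by the standard recursion, and let Ψ be a positive non-decreasing function. Then the set J_n(a_1,...,a_n) = ⋃_{a_{n+1} > Ψ(a_n q_{n-1})/a_n} I_{n+1}(a_1,...,a_n,a_{n+1}) has diameter at most 1/(Ψ(a_n q_{n-1}) · a_n · q_{n-1}²). -/
/-- The Gauss map `T(0) = 0`, `T(x) = 1/x (mod 1)`. -/
noncomputable def gaussT (x : ℝ) : ℝ := if x = 0 then 0 else Int.fract x⁻¹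

/-- The `n`-th continued fraction partial quotient of `x`, `aₙ(x) = ⌊1/T^(n-1)(x)⌋` (for `n ≥ 1`). -/
noncomputable def cfA (x : ℝ) (n : ℕ) : ℤ := ⌊(gaussT^[n - 1] x)⁻¹⌋

/-- The numerators `pₙ` of the continued fraction convergents of `x`. -/
noncomputable def cfP (x : ℝ) : ℕ → ℤ
  | 0 => 0
  | 1 => 1
  | n + 2 => cfA x (n + 2) * cfP x (n + 1) + cfP x n

/-- The denominators `qₙ` of the continued fraction convergents of `x`. -/
noncomputable def cfQ (x : ℝ) : ℕ → ℤ
  | 0 => 1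
  | 1 => cfA x 1
  | n + 2 => cfA x (n + 2) * cfQ x (n + 1) + cfQ x n

/-! Every `x` of `Jₙ` is the Möbius image `x = (pₙ + y pₙ₋₁) / (qₙ + y qₙ₋₁)` of its tail
`y = Tⁿ x`, where `pₙ, pₙ₋₁, qₙ, qₙ₋₁` depend only on `a₁, …, aₙ`, and `aₙ₊₁ > Ψ/aₙ` forces
`0 ≤ y < aₙ/Ψ`. Since `pₙ qₙ₋₁ - pₙ₋₁ qₙ = ±1`, two points of `Jₙ` satisfy
`|x - x'| = |y - y'| / ((qₙ + y qₙ₋₁)(qₙ + y' qₙ₋₁)) ≤ (aₙ/Ψ) / qₙ²`,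
and `qₙ ≥ aₙ qₙ₋₁` turns this into `1 / (Ψ aₙ qₙ₋₁²)`. -/

theorem gaussT_mem_Ico (x : ℝ) : gaussT x ∈ Set.Ico (0 : ℝ) 1 := by
  unfold gaussT
  split_ifs
  · exact ⟨le_rfl, one_pos⟩
  · exact ⟨Int.fract_nonneg _, Int.fract_lt_one _⟩

theorem gaussT_of_ne_zero {t : ℝ} (ht : t ≠ 0) : gaussT t = t⁻¹ - ⌊t⁻¹⌋ := by
  rw [gaussT, if_neg ht, Int.fract]

theorem cfA_succ (x : ℝ) (k : ℕ) : cfA x (k + 1) = ⌊(gaussT^[k] x)⁻¹⌋ := rfl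

theorem gaussT_iterate_ne_zero_of_one_le_cfA {x : ℝ} {k : ℕ} (h : 1 ≤ cfA x (k + 1)) :
    gaussT^[k] x ≠ 0 := by
  intro h0
  simp [cfA_succ, h0] at h

theorem gaussT_iterate_lt_of_lt_cfA {x c : ℝ} {k : ℕ} (hc : 0 < c) (h : c < cfA x (k + 1)) :
    gaussT^[k] x < c⁻¹ := by
  have hinv : c < (gaussT^[k] x)⁻¹ := h.trans_le (cfA_succ x k ▸ Int.floor_le _)
  exact (lt_inv_comm₀ hc (inv_pos.mp (hc.trans hinv))).mp hinv

theorem cfP_mul_cfQ_sub (x : ℝ) (k : ℕ) :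
    cfP x (k + 1) * cfQ x k - cfP x k * cfQ x (k + 1) = (-1) ^ k := by
  induction k with
  | zero => simp [cfP, cfQ]
  | succ k ih =>
    rw [cfP, cfQ]
    linear_combination -ih

theorem mul_cfQ_add_eq {x : ℝ} {k : ℕ} (h : ∀ i ≤ k, gaussT^[i] x ≠ 0) :
    x * (cfQ x (k + 1) + gaussT^[k + 1] x * cfQ x k)
      = cfP x (k + 1) + gaussT^[k + 1] x * cfP x k := by
  induction k with
  | zero =>
    have hx : x ≠ 0 := h 0 le_rfl
    simp [cfP, cfQ, cfA, gaussT_of_ne_zero hx, hx]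
  | succ k ih =>
    have ht := h (k + 1) le_rfl
    set t := gaussT^[k + 1] x
    rw [Function.iterate_succ_apply', gaussT_of_ne_zero ht, cfP, cfQ, cfA_succ]
    push_cast
    -- `T^[k+2] x = t⁻¹ - a_{k+2}`: the identity at `k + 1` is the one at `k` divided by `t`
    linear_combination
      t⁻¹ * ih (fun i hi => h i (by omega)) - (x * cfQ x k - cfP x k) * mul_inv_cancel₀ ht

section TwoStepRecurrence

variable {c u v : ℕ → ℤ} {n : ℕ}

theorem eq_of_two_step_recurrence (h0 : u 0 = v 0) (h1 : 1 ≤ n → u 1 = v 1)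
    (hu : ∀ m, m + 2 ≤ n → u (m + 2) = c (m + 2) * u (m + 1) + u m)
    (hv : ∀ m, m + 2 ≤ n → v (m + 2) = c (m + 2) * v (m + 1) + v m) :
    ∀ m ≤ n, u m = v m := by
  intro m
  induction m using Nat.twoStepInduction with
  | zero => exact fun _ => h0
  | one => exact h1
  | more m ihm ihm1 =>
    intro hm
    rw [hu m hm, hv m hm, ihm (by omega), ihm1 (by omega)]

variable (hc : ∀ i, 1 ≤ i → i ≤ n → 1 ≤ c i) (h0 : u 0 = 1) (h1 : u 1 = c 1)
  (hu : ∀ m, m + 2 ≤ n → u (m + 2) = c (m + 2) * u (m + 1) + u m)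
include hc h0 h1 hu

theorem one_le_of_two_step_recurrence : ∀ m ≤ n, 1 ≤ u m := by
  intro m
  induction m using Nat.twoStepInduction with
  | zero => exact fun _ => h0.ge
  | one => exact fun hn => h1 ▸ hc 1 le_rfl hn
  | more m ihm ihm1 =>
    intro hm
    rw [hu m hm]
    nlinarith [hc (m + 2) (by omega) hm, ihm (by omega), ihm1 (by omega)]

theorem mul_le_of_two_step_recurrence {k : ℕ} (hk : k + 1 ≤ n) :
    c (k + 1) * u k ≤ u (k + 1) := by
  cases k with
  | zero => simp [h0, h1]
  | succ m =>
    rw [hu m hk]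
    linarith [one_le_of_two_step_recurrence hc h0 h1 hu m (by omega)]

end TwoStepRecurrence

section Cylinder

variable {a q : ℕ → ℤ} {n : ℕ} {x x' : ℝ}

theorem cfP_eq_of_cfA_eq (hxa : ∀ i, 1 ≤ i → i ≤ n → cfA x i = a i)
    (hx'a : ∀ i, 1 ≤ i → i ≤ n → cfA x' i = a i) : ∀ m ≤ n, cfP x' m = cfP x m :=
  eq_of_two_step_recurrence (c := a) rfl (fun _ => rfl)
    (fun m hm => by rw [cfP, hx'a (m + 2) (by omega) hm])
    (fun m hm => by rw [cfP, hxa (m + 2) (by omega) hm])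

variable (hq0 : q 0 = 1) (hq1 : q 1 = a 1)
  (hq : ∀ m, m + 2 ≤ n → q (m + 2) = a (m + 2) * q (m + 1) + q m)
include hq0 hq1 hq

theorem cfQ_eq_of_cfA_eq (hxa : ∀ i, 1 ≤ i → i ≤ n → cfA x i = a i) :
    ∀ m ≤ n, cfQ x m = q m :=
  eq_of_two_step_recurrence (c := a) (by rw [cfQ, hq0])
    (fun hn => by rw [cfQ, hq1, hxa 1 le_rfl hn])
    (fun m hm => by rw [cfQ, hxa (m + 2) (by omega) hm]) hq

theorem abs_cfP_mul_sub_eq_one {k : ℕ} (hk : k + 1 ≤ n)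
    (hxa : ∀ i, 1 ≤ i → i ≤ n → cfA x i = a i) :
    |(cfP x (k + 1) * q k - cfP x k * q (k + 1) : ℝ)| = 1 := by
  have hQ := cfQ_eq_of_cfA_eq hq0 hq1 hq hxa
  rw [← hQ k (by omega), ← hQ (k + 1) hk]
  exact_mod_cast (congrArg abs (cfP_mul_cfQ_sub x k)).trans (abs_neg_one_pow k)

theorem mul_add_eq_of_cfA_eq {k : ℕ} (hk : k + 1 ≤ n) (ha : ∀ i, 1 ≤ i → i ≤ n → 1 ≤ a i)
    (hxa : ∀ i, 1 ≤ i → i ≤ n → cfA x i = a i) (hx'a : ∀ i, 1 ≤ i → i ≤ n → cfA x' i = a i) :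
    x' * (q (k + 1) + gaussT^[k + 1] x' * q k)
      = cfP x (k + 1) + gaussT^[k + 1] x' * cfP x k := by
  have hQ := cfQ_eq_of_cfA_eq hq0 hq1 hq hx'a
  have hP := cfP_eq_of_cfA_eq hxa hx'a
  rw [← hQ k (by omega), ← hQ (k + 1) hk, ← hP k (by omega), ← hP (k + 1) hk]
  refine mul_cfQ_add_eq fun i hi => gaussT_iterate_ne_zero_of_one_le_cfA ?_
  rw [hx'a (i + 1) (by omega) (by omega)]
  exact ha (i + 1) (by omega) (by omega)

end Cylinder

theorem abs_sub_le_div_sq {p₁ p₀ q₁ q₀ x x' y y' b : ℝ} (hdet : |p₁ * q₀ - p₀ * q₁| = 1)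
    (hq₁ : 0 < q₁) (hq₀ : 0 ≤ q₀) (hy : y ∈ Set.Icc 0 b) (hy' : y' ∈ Set.Icc 0 b)
    (hx : x * (q₁ + y * q₀) = p₁ + y * p₀) (hx' : x' * (q₁ + y' * q₀) = p₁ + y' * p₀) :
    |x - x'| ≤ b / q₁ ^ 2 := by
  have hD : q₁ ^ 2 ≤ (q₁ + y * q₀) * (q₁ + y' * q₀) := by
    nlinarith [mul_nonneg hy.1 hq₀, mul_nonneg hy'.1 hq₀]
  have hkey :
      (x - x') * ((q₁ + y * q₀) * (q₁ + y' * q₀)) = (y' - y) * (p₁ * q₀ - p₀ * q₁) := by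
    linear_combination (q₁ + y' * q₀) * hx - (q₁ + y * q₀) * hx'
  have habs : |x - x'| * ((q₁ + y * q₀) * (q₁ + y' * q₀)) = |y' - y| := by
    have := congrArg abs hkey
    rwa [abs_mul (x - x'), abs_mul (y' - y), abs_of_pos ((pow_pos hq₁ 2).trans_le hD), hdet,
      mul_one] at this
  rw [le_div_iff₀ (by positivity)]
  calc |x - x'| * q₁ ^ 2 ≤ |x - x'| * ((q₁ + y * q₀) * (q₁ + y' * q₀)) := by gcongr
    _ = |y' - y| := habs
    _ ≤ b := abs_sub_le_iff.mpr ⟨by linarith [hy.1, hy'.2], by linarith [hy.2, hy'.1]⟩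

theorem Jn_diam_bound_general (n : ℕ) (hn : 1 ≤ n) (a : ℕ → ℤ)
    (ha : ∀ i, 1 ≤ i → i ≤ n → 1 ≤ a i)
    (q : ℕ → ℤ) (hq0 : q 0 = 1) (hq1 : q 1 = a 1)
    (hq : ∀ m, 1 ≤ m → m + 1 ≤ n → q (m + 1) = a (m + 1) * q m + q (m - 1))
    (Ψ : ℝ → ℝ) (hΨpos : ∀ t : ℝ, 0 < Ψ t) :
    Metric.diam {x ∈ Set.Ico (0 : ℝ) 1 | (∀ i, 1 ≤ i → i ≤ n → cfA x i = a i) ∧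
        (cfA x (n + 1) : ℝ) > Ψ ((a n : ℝ) * (q (n - 1) : ℝ)) / (a n : ℝ)} ≤
      1 / (Ψ ((a n : ℝ) * (q (n - 1) : ℝ)) * (a n : ℝ) * (q (n - 1) : ℝ) ^ 2) := by
  obtain ⟨k, rfl⟩ : ∃ k, n = k + 1 := ⟨n - 1, by omega⟩
  simp only [Nat.add_sub_cancel]
  have hq' : ∀ m, m + 2 ≤ k + 1 → q (m + 2) = a (m + 2) * q (m + 1) + q m :=
    fun m hm => hq (m + 1) (by omega) hm
  set Ψ₀ := Ψ (a (k + 1) * q k)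
  have han : (1 : ℝ) ≤ a (k + 1) := by exact_mod_cast ha (k + 1) (by omega) le_rfl
  have hqk : (1 : ℝ) ≤ q k := by
    exact_mod_cast one_le_of_two_step_recurrence ha hq0 hq1 hq' k (by omega)
  have hqn : (a (k + 1) * q k : ℝ) ≤ q (k + 1) := by
    exact_mod_cast mul_le_of_two_step_recurrence ha hq0 hq1 hq' le_rfl
  have hΨ₀ : 0 < Ψ₀ := hΨpos _
  have hc : 0 < Ψ₀ / a (k + 1) := by positivity
  have htail : ∀ z, Ψ₀ / a (k + 1) < cfA z (k + 1 + 1) →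
      gaussT^[k + 1] z ∈ Set.Icc 0 (Ψ₀ / a (k + 1))⁻¹ := fun z hz =>
    ⟨(Function.iterate_succ_apply' gaussT k z ▸ gaussT_mem_Ico _).1,
      (gaussT_iterate_lt_of_lt_cfA hc hz).le⟩
  refine Metric.diam_le_of_forall_dist_le (by positivity) ?_
  rintro x ⟨-, hxa, hx⟩ x' ⟨-, hx'a, hx'⟩
  calc dist x x' = |x - x'| := Real.dist_eq x x'
    _ ≤ (Ψ₀ / a (k + 1))⁻¹ / (q (k + 1) : ℝ) ^ 2 :=
      abs_sub_le_div_sq (abs_cfP_mul_sub_eq_one hq0 hq1 hq' le_rfl hxa)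
        (by nlinarith) (by positivity) (htail x hx) (htail x' hx')
        (mul_add_eq_of_cfA_eq hq0 hq1 hq' le_rfl ha hxa hxa)
        (mul_add_eq_of_cfA_eq hq0 hq1 hq' le_rfl ha hxa hx'a)
    _ ≤ (Ψ₀ / a (k + 1))⁻¹ / (a (k + 1) * q k : ℝ) ^ 2 := by gcongr
    _ = 1 / (Ψ₀ * a (k + 1) * q k ^ 2) := by field_simp

/-- The set `Jₙ(a₁,…,aₙ) = ⋃_{aₙ₊₁ > Ψ(aₙqₙ₋₁)/aₙ} Iₙ₊₁(a₁,…,aₙ,aₙ₊₁)` has diameter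
at most `1/(Ψ(aₙqₙ₋₁)·aₙ·qₙ₋₁²)`. -/
theorem Jn_diam_bound (n : ℕ) (hn : 1 ≤ n) (a : ℕ → ℤ)
    (ha : ∀ i, 1 ≤ i → i ≤ n → 1 ≤ a i)
    (q : ℕ → ℤ) (hq0 : q 0 = 1) (hq1 : q 1 = a 1)
    (hq : ∀ m, 1 ≤ m → m + 1 ≤ n → q (m + 1) = a (m + 1) * q m + q (m - 1))
    (Ψ : ℝ → ℝ) (hΨmono : Monotone Ψ) (hΨpos : ∀ t : ℝ, 0 < Ψ t) :
    Metric.diam {x ∈ Set.Ico (0 : ℝ) 1 | (∀ i, 1 ≤ i → i ≤ n → cfA x i = a i) ∧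
        (cfA x (n + 1) : ℝ) > Ψ ((a n : ℝ) * (q (n - 1) : ℝ)) / (a n : ℝ)} ≤
      1 / (Ψ ((a n : ℝ) * (q (n - 1) : ℝ)) * (a n : ℝ) * (q (n - 1) : ℝ) ^ 2) :=
  Jn_diam_bound_general n hn a ha q hq0 hq1 hq Ψ hΨpos
end

section
/- Let ψ: ℝ_+ → ℝ_+ be non-increasing with tψ(t) < 1 for large t, and Ψ(t) = tψ(t)/(1 − tψ(t)). For irrational x ∈ [0,1), x ∈ D(ψ) if and only if |q_{n-1}x − p_{n-1}| < ψ(q_n) for all sufficiently large n. -/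
/-- `x` is `ψ`-Dirichlet improvable: there exists `N` such that for all `t > N`,
the system `|qx − p| < ψ(t)`, `|q| < t` has a nontrivial integer solution. -/
def DirichletImprovable (ψ : ℝ → ℝ) (x : ℝ) : Prop :=
  ∃ N : ℝ, ∀ t > N, ∃ p q : ℤ, ¬(p = 0 ∧ q = 0) ∧ |(q : ℝ) * x - (p : ℝ)| < ψ t ∧ |(q : ℝ)| < t

open Filter

theorem abs_le_abs_add_of_mul_nonneg {α : Type*} [Ring α] [LinearOrder α] [IsStrictOrderedRing α]
    {a b : α} (h : 0 ≤ a * b) : |a| ≤ |a + b| := by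
  rw [(abs_add_eq_add_abs_iff a b).2 (mul_nonneg_iff.1 h)]
  exact le_add_of_nonneg_right (abs_nonneg b)

theorem Int.le_abs_mul_add_mul {μ ν A B : ℤ} (hA : 0 ≤ A) (hB : 0 ≤ B) (hμν : 0 ≤ μ * ν)
    (hν : ν ≠ 0) : B ≤ |μ * A + ν * B| :=
  calc B ≤ |ν| * B := le_mul_of_one_le_left hB (Int.one_le_abs hν)
    _ = |ν * B| := by rw [abs_mul, abs_of_nonneg hB]
    _ ≤ |ν * B + μ * A| :=
      abs_le_abs_add_of_mul_nonneg (by linarith [mul_nonneg hμν (mul_nonneg hA hB)])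
    _ = |μ * A + ν * B| := by rw [add_comm]

theorem exists_lt_le_succ {α : Type*} [LinearOrder α] {f : ℕ → α} {t : α} {N m : ℕ}
    (hN : f N < t) (hNm : N ≤ m) (hm : t ≤ f m) : ∃ n ≥ N, f n < t ∧ t ≤ f (n + 1) := by
  by_contra! h
  exact (Nat.le_induction (P := fun n _ => f n < t) hN (fun n hn ih => h n hn ih) m hNm).not_ge hm

theorem irrational_gaussT {y : ℝ} (hy : Irrational y) : Irrational (gaussT y) := by
  rw [gaussT, if_neg hy.ne_zero, Int.fract]
  exact hy.inv.sub_intCast _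

theorem irrational_gaussT_iterate {y : ℝ} (hy : Irrational y) :
    ∀ n, Irrational (gaussT^[n] y)
  | 0 => hy
  | n + 1 => by
    rw [Function.iterate_succ_apply']
    exact irrational_gaussT (irrational_gaussT_iterate hy n)

theorem gaussT_mem_Ioo {y : ℝ} (hy : Irrational y) : gaussT y ∈ Set.Ioo 0 1 := by
  rw [gaussT, if_neg hy.ne_zero]
  exact ⟨Int.fract_pos.2 (hy.inv.ne_int _), Int.fract_lt_one _⟩

section ContinuedFraction

variable {x : ℝ}

theorem gaussT_iterate_mem_Ioo (hx : x ∈ Set.Ioo 0 1) (hirr : Irrational x) :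
    ∀ n, gaussT^[n] x ∈ Set.Ioo 0 1
  | 0 => hx
  | n + 1 => by
    rw [Function.iterate_succ_apply']
    exact gaussT_mem_Ioo (irrational_gaussT_iterate hirr n)

theorem inv_gaussT_iterate (hirr : Irrational x) (n : ℕ) :
    (gaussT^[n] x)⁻¹ = cfA x (n + 1) + gaussT^[n + 1] x := by
  rw [Function.iterate_succ_apply', gaussT, if_neg (irrational_gaussT_iterate hirr n).ne_zero, cfA,
    Nat.add_sub_cancel, Int.floor_add_fract]

theorem one_le_cfA (hx : x ∈ Set.Ioo 0 1) (hirr : Irrational x) (n : ℕ) : 1 ≤ cfA x (n + 1) := by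
  have hT := gaussT_iterate_mem_Ioo hx hirr n
  exact Int.le_floor.2 (by exact_mod_cast ((one_lt_inv₀ hT.1).2 hT.2).le)

theorem one_le_cfQ (hx : x ∈ Set.Ioo 0 1) (hirr : Irrational x) : ∀ n, 1 ≤ cfQ x n
  | 0 => le_rfl
  | 1 => one_le_cfA hx hirr 0
  | n + 2 => by
    have := one_le_cfA hx hirr (n + 1)
    have := one_le_cfQ hx hirr (n + 1)
    have := one_le_cfQ hx hirr n
    show 1 ≤ cfA x (n + 2) * cfQ x (n + 1) + cfQ x n
    nlinarith

theorem natCast_le_cfQ (hx : x ∈ Set.Ioo 0 1) (hirr : Irrational x) : ∀ n : ℕ, (n : ℤ) ≤ cfQ x n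
  | 0 => zero_le_one
  | 1 => one_le_cfQ hx hirr 1
  | n + 2 => by
    have := one_le_cfA hx hirr (n + 1)
    have := natCast_le_cfQ hx hirr (n + 1)
    have := one_le_cfQ hx hirr n
    show ((n + 2 : ℕ) : ℤ) ≤ cfA x (n + 2) * cfQ x (n + 1) + cfQ x n
    push_cast at *
    nlinarith

theorem tendsto_cfQ_atTop (hx : x ∈ Set.Ioo 0 1) (hirr : Irrational x) :
    Tendsto (fun n => (cfQ x n : ℝ)) atTop atTop :=
  tendsto_atTop_mono (fun n => by exact_mod_cast natCast_le_cfQ hx hirr n)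
    tendsto_natCast_atTop_atTop

theorem cfQ_mul_cfP_sub_cfP_mul_cfQ :
    ∀ n, cfQ x (n + 1) * cfP x n - cfP x (n + 1) * cfQ x n = (-1) ^ (n + 1)
  | 0 => by simp [cfQ, cfP]
  | n + 1 => by
    have ih := cfQ_mul_cfP_sub_cfP_mul_cfQ n
    rw [cfQ.eq_3, cfP.eq_3]
    linear_combination (-1 : ℤ) * ih

theorem exists_eq_cfP_cfQ_combination (n : ℕ) (p q : ℤ) :
    ∃ μ ν : ℤ, p = μ * cfP x n + ν * cfP x (n + 1) ∧ q = μ * cfQ x n + ν * cfQ x (n + 1) := by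
  have hdet := cfQ_mul_cfP_sub_cfP_mul_cfQ (x := x) n
  have hsq : ((-1 : ℤ) ^ (n + 1)) ^ 2 = 1 := by rw [← pow_mul, mul_comm, pow_mul, neg_one_sq, one_pow]
  refine ⟨(-1) ^ (n + 1) * (p * cfQ x (n + 1) - q * cfP x (n + 1)),
    (-1) ^ (n + 1) * (q * cfP x n - p * cfQ x n), ?_, ?_⟩
  · linear_combination -(-1) ^ (n + 1) * p * hdet - p * hsq
  · linear_combination -(-1) ^ (n + 1) * q * hdet - q * hsq

theorem prod_gaussT_iterate_eq (hirr : Irrational x) (m : ℕ) :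
    ∏ i ∈ Finset.range m, gaussT^[i] x = cfA x (m + 1) * ∏ i ∈ Finset.range (m + 1), gaussT^[i] x
      + ∏ i ∈ Finset.range (m + 2), gaussT^[i] x := by
  have h := inv_gaussT_iterate hirr m
  have hinv := mul_inv_cancel₀ (irrational_gaussT_iterate hirr m).ne_zero
  simp only [Finset.prod_range_succ]
  linear_combination (∏ i ∈ Finset.range m, gaussT^[i] x) * (gaussT^[m] x) * h
    - (∏ i ∈ Finset.range m, gaussT^[i] x) * hinv

theorem cfQ_mul_sub_cfP (hirr : Irrational x) : ∀ n,
    (cfQ x n : ℝ) * x - cfP x n = (-1) ^ n * ∏ i ∈ Finset.range (n + 1), gaussT^[i] x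
  | 0 => by simp [cfQ, cfP]
  | 1 => by
    have h := prod_gaussT_iterate_eq hirr 0
    simp only [cfQ, cfP, zero_add, Finset.prod_range_succ, Finset.prod_range_zero, one_mul,
      Function.iterate_zero_apply] at h ⊢
    push_cast
    linear_combination -h
  | n + 2 => by
    have h := prod_gaussT_iterate_eq hirr (n + 1)
    have ih₀ := cfQ_mul_sub_cfP hirr n
    have ih₁ := cfQ_mul_sub_cfP hirr (n + 1)
    rw [cfQ.eq_3, cfP.eq_3]
    push_cast
    linear_combination (cfA x (n + 2) : ℝ) * ih₁ + ih₀ + (-1) ^ n * h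

theorem cfQ_mul_sub_cfP_mul_succ_neg (hx : x ∈ Set.Ioo 0 1) (hirr : Irrational x) (n : ℕ) :
    ((cfQ x n : ℝ) * x - cfP x n) * ((cfQ x (n + 1) : ℝ) * x - cfP x (n + 1)) < 0 := by
  have hprod_pos (m : ℕ) : 0 < ∏ i ∈ Finset.range m, gaussT^[i] x :=
    Finset.prod_pos fun i _ => (gaussT_iterate_mem_Ioo hx hirr i).1
  have hsq : ((-1 : ℝ) ^ n) ^ 2 = 1 := by rw [← pow_mul, mul_comm, pow_mul, neg_one_sq, one_pow]
  rw [cfQ_mul_sub_cfP hirr, cfQ_mul_sub_cfP hirr, pow_succ]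
  linear_combination -(∏ i ∈ Finset.range (n + 1), gaussT^[i] x)
    * (∏ i ∈ Finset.range (n + 1 + 1), gaussT^[i] x) * hsq
    + mul_pos (hprod_pos (n + 1)) (hprod_pos (n + 2))

theorem abs_cfQ_mul_sub_cfP_le (hx : x ∈ Set.Ioo 0 1) (hirr : Irrational x) {n : ℕ} {p q : ℤ}
    (hpq : ¬(p = 0 ∧ q = 0)) (hq : |q| < cfQ x (n + 1)) :
    |(cfQ x n : ℝ) * x - cfP x n| ≤ |(q : ℝ) * x - p| := by
  obtain ⟨μ, ν, rfl, rfl⟩ := exists_eq_cfP_cfQ_combination (x := x) n p q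
  have hQ₀ := one_le_cfQ hx hirr n
  have hQ₁ := one_le_cfQ hx hirr (n + 1)
  have hfar : ¬(0 ≤ μ * ν ∧ ν ≠ 0) := fun ⟨hμν, hν⟩ =>
    hq.not_ge (Int.le_abs_mul_add_mul (by omega) (by omega) hμν hν)
  have hμ : μ ≠ 0 := by
    rintro rfl
    exact hfar ⟨by simp, fun hν => hpq ⟨by simp [hν], by simp [hν]⟩⟩
  have hμν : μ * ν ≤ 0 := by
    by_contra! h
    exact hfar ⟨h.le, right_ne_zero_of_mul h.ne'⟩
  set e₀ := (cfQ x n : ℝ) * x - cfP x n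
  set e₁ := (cfQ x (n + 1) : ℝ) * x - cfP x (n + 1)
  have hsame_sign : 0 ≤ (μ * e₀) * (ν * e₁) := by
    rw [mul_mul_mul_comm]
    exact mul_nonneg_of_nonpos_of_nonpos (by exact_mod_cast hμν)
      (cfQ_mul_sub_cfP_mul_succ_neg hx hirr n).le
  calc |e₀| ≤ |(μ : ℝ)| * |e₀| :=
        le_mul_of_one_le_left (abs_nonneg _) (by exact_mod_cast Int.one_le_abs hμ)
    _ = |μ * e₀| := (abs_mul _ _).symm
    _ ≤ |μ * e₀ + ν * e₁| := abs_le_abs_add_of_mul_nonneg hsame_sign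
    _ = _ := by congr 1; push_cast; ring

end ContinuedFraction

theorem dirichlet_improvable_iff_general (ψ : ℝ → ℝ)
    (hψmono : ∀ s t : ℝ, 0 < s → s ≤ t → ψ t ≤ ψ s)
    (x : ℝ) (hx : x ∈ Set.Ico (0 : ℝ) 1) (hirr : Irrational x) :
    DirichletImprovable ψ x ↔
      ∃ N : ℕ, ∀ n ≥ N, 1 ≤ n →
        |(cfQ x (n - 1) : ℝ) * x - (cfP x (n - 1) : ℝ)| < ψ (cfQ x n) := by
  have hx' : x ∈ Set.Ioo 0 1 := ⟨hx.1.lt_of_ne' hirr.ne_zero, hx.2⟩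
  have hQ := tendsto_cfQ_atTop hx' hirr
  constructor
  · rintro ⟨T, hT⟩
    obtain ⟨N, hN⟩ := eventually_atTop.1 (hQ.eventually_gt_atTop T)
    refine ⟨N, fun n hn h1n => ?_⟩
    obtain ⟨m, rfl⟩ := Nat.exists_eq_add_of_le' h1n
    obtain ⟨p, q, hpq, happrox, hq⟩ := hT _ (hN _ hn)
    have hq' : |q| < cfQ x (m + 1) := by rw [← Int.cast_abs] at hq; exact_mod_cast hq
    simpa using (abs_cfQ_mul_sub_cfP_le hx' hirr hpq hq').trans_lt happrox
  · rintro ⟨N, hN⟩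
    refine ⟨cfQ x N, fun t ht => ?_⟩
    obtain ⟨m, htm, hNm⟩ := ((hQ.eventually_ge_atTop t).and (eventually_ge_atTop N)).exists
    obtain ⟨n, hnN, hlt, hle⟩ := exists_lt_le_succ (f := fun k => (cfQ x k : ℝ)) ht hNm htm
    have hQn : (1 : ℝ) ≤ cfQ x n := by exact_mod_cast one_le_cfQ hx' hirr n
    refine ⟨cfP x n, cfQ x n, fun h => by linarith [one_le_cfQ hx' hirr n, h.2], ?_,
      by rwa [abs_of_pos (by linarith)]⟩
    calc |(cfQ x n : ℝ) * x - cfP x n| < ψ (cfQ x (n + 1)) := by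
          simpa using hN (n + 1) (by omega) (by omega)
      _ ≤ ψ t := hψmono _ _ (by linarith) hle

/-- For irrational `x ∈ [0,1)`, `x ∈ D(ψ)` if and only if
`|qₙ₋₁x − pₙ₋₁| < ψ(qₙ)` for all sufficiently large `n`. -/
theorem dirichlet_improvable_iff (ψ : ℝ → ℝ) (hψpos : ∀ t > (0 : ℝ), 0 < ψ t)
    (hψmono : ∀ s t : ℝ, 0 < s → s ≤ t → ψ t ≤ ψ s)
    (hsmall : ∃ T : ℝ, ∀ t ≥ T, t * ψ t < 1)
    (x : ℝ) (hx : x ∈ Set.Ico (0 : ℝ) 1) (hirr : Irrational x) :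
    DirichletImprovable ψ x ↔
      ∃ N : ℕ, ∀ n ≥ N, 1 ≤ n →
        |(cfQ x (n - 1) : ℝ) * x - (cfP x (n - 1) : ℝ)| < ψ (cfQ x n) :=
  dirichlet_improvable_iff_general ψ hψmono x hx hirr
end
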